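/- arXiv:1612.08690 — 2 statements merged into one kernel-verified Lean document; each statement's English description precedes it below -/
import Mathlib

section
/- Let g ≥ 0 be even. Then for every i ≥ 0: if i is even then α·γ^i ζ_{g−2i−1}^+ ∈ J_g^+, and if i is odd then γ^i ζ_{g−2i−1}^+ ∈ J_g^+. In particular (taking i = 0), α·ζ_{g−1}^+ ∈ J_g^+ and hence α·J_{g−1}^+ ⊆ J_g^+. -/
open MvPolynomial

/-- ζ_k^+ ∈ ℂ[α,γ] (variables: X 0 = α, X 1 = γ):
    ζ_{k+1}^+ = α ζ_k^+ + 16k² ζ_{k−1}^+ + 2k(k−1) γ ζ_{k−2}^+ for k even, and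
    ζ_{k+1}^+ = α ζ_k^+ + 2k(k−1) γ ζ_{k−2}^+ for k odd. -/
noncomputable def zp : ℕ → MvPolynomial (Fin 2) ℂ
  | 0 => 1
  | 1 => X 0
  | 2 => X 0 * zp 1
  | (n + 3) =>
      if n % 2 = 0 then
        X 0 * zp (n + 2) + C (16 * ((n : ℂ) + 2) ^ 2) * zp (n + 1)
          + C (2 * ((n : ℂ) + 2) * ((n : ℂ) + 1)) * X 1 * zp n
      else
        X 0 * zp (n + 2) + C (2 * ((n : ℂ) + 2) * ((n : ℂ) + 1)) * X 1 * zp n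

/-- ζ_k^+ for an integer index k, with ζ_k^+ = 0 for k < 0. -/
noncomputable def zpZ (k : ℤ) : MvPolynomial (Fin 2) ℂ :=
  if k < 0 then 0 else zp k.toNat

/-- J_g^+ = (ζ_g^+, ζ_{g+1}^+, ζ_{g+2}^+) ⊆ ℂ[α,γ], for a natural number g. -/
noncomputable def Jp (g : ℕ) : Ideal (MvPolynomial (Fin 2) ℂ) :=
  Ideal.span {zp g, zp (g + 1), zp (g + 2)}

/-- J_m^+ for an integer index m (the unit ideal for m ≤ 0, since ζ_0^+ = 1). -/
noncomputable def JpZ (m : ℤ) : Ideal (MvPolynomial (Fin 2) ℂ) :=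
  Ideal.span {zpZ m, zpZ (m + 1), zpZ (m + 2)}

def cN (t : ℕ) : ℕ := 2*(2*t+1)*(2*t)
def dN (t : ℕ) : ℕ := 2*(2*t+2)*(2*t+1)
def aN (t : ℕ) : ℕ := 16*(2*t+2)^2

lemma zp_even (n : ℕ) (h : n % 2 = 0) :
    zp (n+3) = X 0 * zp (n + 2) + C (16 * ((n : ℂ) + 2) ^ 2) * zp (n + 1)
          + C (2 * ((n : ℂ) + 2) * ((n : ℂ) + 1)) * X 1 * zp n := by
  rw [zp, if_pos h]

lemma zp_odd (n : ℕ) (h : n % 2 = 1) :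
    zp (n+3) = X 0 * zp (n + 2) + C (2 * ((n : ℂ) + 2) * ((n : ℂ) + 1)) * X 1 * zp n := by
  rw [zp]; simp [h]

/-- The `P`-identity: ζ_{2t+4} = α ζ_{2t+3} + cN(t+1) γ ζ_{2t+1}, times γ^j. -/
lemma Oident (j t : ℕ) :
    X 1 ^ j * zp (2*t+4) = X 0 * (X 1 ^ j * zp (2*t+3))
      + C ((cN (t+1) : ℂ)) * (X 1 ^ (j+1) * zp (2*t+1)) := by
  have h := zp_odd (2*t+1) (by omega)
  rw [show 2*t+1+3 = 2*t+4 by omega, show 2*t+1+2 = 2*t+3 by omega] at h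
  have hc : ((cN (t+1) : ℕ) : ℂ) = 2 * (((2*t+1 : ℕ) : ℂ) + 2) * (((2*t+1 : ℕ) : ℂ) + 1) := by
    push_cast [cN]; ring
  rw [hc]
  rw [h]
  push_cast
  ring

/-- The `V`-identity: ζ_{2s+3} = α ζ_{2s+2} + aN(s) ζ_{2s+1} + dN(s) γ ζ_{2s}, times γ^j. -/
lemma Eident (j s : ℕ) :
    X 1 ^ j * zp (2*s+3) = X 0 * (X 1 ^ j * zp (2*s+2))
      + C ((aN s : ℂ)) * (X 1 ^ j * zp (2*s+1))
      + C ((dN s : ℂ)) * (X 1 ^ (j+1) * zp (2*s)) := by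
  have h := zp_even (2*s) (by omega)
  rw [show 2*s+3 = 2*s+3 from rfl] at h
  have ha : ((aN s : ℕ) : ℂ) = 16 * (((2*s : ℕ) : ℂ) + 2)^2 := by push_cast [aN]; ring
  have hd : ((dN s : ℕ) : ℂ) = 2 * (((2*s : ℕ) : ℂ) + 2) * (((2*s : ℕ) : ℂ) + 1) := by
    push_cast [dN]; ring
  rw [ha, hd, h]
  push_cast
  ring

lemma mem_of_C_mul {I : Ideal (MvPolynomial (Fin 2) ℂ)} {c : ℂ} (hc : c ≠ 0)
    {f : MvPolynomial (Fin 2) ℂ} (h : C c * f ∈ I) : f ∈ I := by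
  have h2 := I.mul_mem_left (C c⁻¹) h
  rwa [← mul_assoc, ← C_mul, inv_mul_cancel₀ hc, C_1, one_mul] at h2

lemma zp_mem_Jp (g : ℕ) : zp g ∈ Jp g :=
  Ideal.subset_span (by simp)
lemma zp1_mem_Jp (g : ℕ) : zp (g+1) ∈ Jp g :=
  Ideal.subset_span (by simp)
lemma zp2_mem_Jp (g : ℕ) : zp (g+2) ∈ Jp g :=
  Ideal.subset_span (by simp)

lemma cN_ne (t : ℕ) : ((cN (t+1) : ℕ) : ℂ) ≠ 0 := by
  have : 0 < cN (t+1) := by simp [cN]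
  exact Nat.cast_ne_zero.mpr this.ne'
lemma dN_ne (t : ℕ) : ((dN t : ℕ) : ℂ) ≠ 0 := by
  have : 0 < dN t := by simp [dN]
  exact Nat.cast_ne_zero.mpr this.ne'

lemma Lfact (h' : ℕ) : ∀ j t, j + t = h' →
    X 1 ^ (j+1) * zp (2*t+1) ∈ Jp (2*h'+2) ∧ X 1 ^ (j+1) * zp (2*t+2) ∈ Jp (2*h'+2)
      ∧ X 1 ^ j * zp (2*t+3) ∈ Jp (2*h'+2) := by
  set J := Jp (2*h'+2) with hJ
  have hg0 : zp (2*h'+2) ∈ J := zp_mem_Jp _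
  have hg1 : zp (2*h'+3) ∈ J := by
    have := zp1_mem_Jp (2*h'+2); rwa [show 2*h'+2+1 = 2*h'+3 by omega] at this
  have hg2 : zp (2*h'+4) ∈ J := by
    have := zp2_mem_Jp (2*h'+2); rwa [show 2*h'+2+2 = 2*h'+4 by omega] at this
  intro j
  induction j with
  | zero =>
    intro t ht
    have ht' : t = h' := by omega
    rw [ht']
    refine ⟨?_, ?_, ?_⟩
    · -- γ ζ_{2h'+1} ∈ J from Oident 0 h'
      have hO := Oident 0 h'
      rw [show 2*h'+4 = 2*h'+4 from rfl] at hO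
      apply mem_of_C_mul (cN_ne h')
      have : C ((cN (h'+1) : ℂ)) * (X 1 ^ (0+1) * zp (2*h'+1))
          = X 1 ^ 0 * zp (2*h'+4) - X 0 * (X 1 ^ 0 * zp (2*h'+3)) := by
        rw [hO]; ring
      rw [this]
      simp only [pow_zero, one_mul]
      exact sub_mem hg2 (J.mul_mem_left _ hg1)
    · have : X 1 ^ (0+1) * zp (2*h'+2) = X 1 * zp (2*h'+2) := by ring
      rw [this]
      exact J.mul_mem_left _ hg0
    · simpa using hg1
  | succ j ih =>
    intro t ht
    obtain ⟨iA, iB, iG⟩ := ih (t+1) (by omega)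
    have hA : X 1 ^ (j+2) * zp (2*t+1) ∈ J := by
      apply mem_of_C_mul (cN_ne t)
      have hO := Oident (j+1) t
      have : C ((cN (t+1) : ℂ)) * (X 1 ^ (j+2) * zp (2*t+1))
          = X 1 ^ (j+1) * zp (2*t+4) - X 0 * (X 1 ^ (j+1) * zp (2*t+3)) := by
        rw [hO]; ring
      rw [this]
      have iB' : X 1 ^ (j+1) * zp (2*t+4) ∈ J := by
        have := iB; rwa [show 2*(t+1)+2 = 2*t+4 by omega] at this
      have iA' : X 1 ^ (j+1) * zp (2*t+3) ∈ J := by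
        have := iA; rwa [show 2*(t+1)+1 = 2*t+3 by omega] at this
      exact sub_mem iB' (J.mul_mem_left _ iA')
    refine ⟨hA, ?_, ?_⟩
    · -- γX_{j+1} via Eident (j+1) (t+1)
      apply mem_of_C_mul (dN_ne (t+1))
      have hE := Eident (j+1) (t+1)
      rw [show 2*(t+1)+3 = 2*t+5 by omega, show 2*(t+1)+2 = 2*t+4 by omega,
          show 2*(t+1)+1 = 2*t+3 by omega, show 2*(t+1) = 2*t+2 by omega] at hE
      have : C ((dN (t+1) : ℂ)) * (X 1 ^ (j+2) * zp (2*t+2))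
          = X 1 ^ (j+1) * zp (2*t+5) - X 0 * (X 1 ^ (j+1) * zp (2*t+4))
            - C ((aN (t+1) : ℂ)) * (X 1 ^ (j+1) * zp (2*t+3)) := by
        rw [hE]; ring
      rw [this]
      have iG' : X 1 ^ (j+1) * zp (2*t+5) ∈ J := by
        have h5 : X 1 ^ (j+1) * zp (2*t+5) = X 1 * (X 1 ^ j * zp (2*(t+1)+3)) := by
          rw [show 2*(t+1)+3 = 2*t+5 by omega]; ring
        rw [h5]
        exact J.mul_mem_left _ iG
      have iB' : X 1 ^ (j+1) * zp (2*t+4) ∈ J := by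
        have := iB; rwa [show 2*(t+1)+2 = 2*t+4 by omega] at this
      have iA' : X 1 ^ (j+1) * zp (2*t+3) ∈ J := by
        have := iA; rwa [show 2*(t+1)+1 = 2*t+3 by omega] at this
      exact sub_mem (sub_mem iG' (J.mul_mem_left _ iB')) (J.mul_mem_left _ iA')
    · -- G at (j+1, t) = A at (j, t+1)
      have := iA; rwa [show 2*(t+1)+1 = 2*t+3 by omega] at this

lemma dN_pos (t : ℕ) : 0 < dN t := by simp [dN]
lemma aN_pos (t : ℕ) : 0 < aN t := by simp [aN]
lemma cN_pos {t : ℕ} (ht : 0 < t) : 0 < cN t := by simp [cN]; omega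

noncomputable def PQ (h' : ℕ) : ℕ → Polynomial ℂ × Polynomial ℂ
  | 0 => (1, 0)
  | (j+1) => (Polynomial.C (((cN (h'-j) : ℂ))⁻¹) * ((PQ h' j).2 - Polynomial.X * (PQ h' j).1),
              Polynomial.C (-((dN (h'-j) : ℂ))⁻¹) * (Polynomial.X * (PQ h' j).2 + Polynomial.C ((aN (h'-j) : ℂ)) * (PQ h' j).1))

noncomputable def pq (k : ℝ) (h' : ℕ) : ℕ → ℝ × ℝ
  | 0 => (1, 0)
  | (j+1) => (((cN (h'-j) : ℝ))⁻¹ * ((pq k h' j).2 - 4*k*(pq k h' j).1),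
              ((dN (h'-j) : ℝ))⁻¹ * ((aN (h'-j) : ℝ)*(pq k h' j).1 - 4*k*(pq k h' j).2))

lemma I_pow_add_two (j : ℕ) : (Complex.I) ^ (j+2) = -Complex.I ^ j := by
  rw [pow_add, Complex.I_sq]; ring

lemma PQ_eval_I (h' : ℕ) (k : ℝ) (j : ℕ) :
    (Polynomial.eval ((4*k : ℝ) * Complex.I) (PQ h' j).1 = Complex.I ^ j * ((pq k h' j).1 : ℂ)) ∧
    (Polynomial.eval ((4*k : ℝ) * Complex.I) (PQ h' j).2 = Complex.I ^ (j+1) * ((pq k h' j).2 : ℂ)) := by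
  induction j with
  | zero => simp [PQ, pq]
  | succ j ih =>
    obtain ⟨ih1, ih2⟩ := ih
    constructor
    · simp only [PQ, pq, Polynomial.eval_mul, Polynomial.eval_C, Polynomial.eval_sub,
        Polynomial.eval_X, ih1, ih2]
      push_cast
      ring
    · simp only [PQ, pq, Polynomial.eval_mul, Polynomial.eval_C, Polynomial.eval_add,
        Polynomial.eval_X, ih1, ih2]
      push_cast
      ring_nf
      rw [Complex.I_sq]
      ring

lemma pq_sign (h' : ℕ) {k : ℝ} (hk : 0 < k) :
    ∀ j, j ≤ h' → 0 ≤ (-1:ℝ)^j * (pq k h' j).1 ∧ 0 ≤ (-1:ℝ)^(j+1) * (pq k h' j).2 ∧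
      0 < (-1:ℝ)^j * (4*k*(pq k h' j).1 - (pq k h' j).2) := by
  intro j
  induction j with
  | zero => intro _; simp [pq]; positivity
  | succ j ih =>
    intro hj
    obtain ⟨h1, h2, h3⟩ := ih (by omega)
    have hc : (0:ℝ) < (cN (h'-j) : ℝ) := by
      exact_mod_cast cN_pos (by omega)
    have hd : (0:ℝ) < (dN (h'-j) : ℝ) := by exact_mod_cast dN_pos _
    have ha : (0:ℝ) < (aN (h'-j) : ℝ) := by exact_mod_cast aN_pos _
    have e1 : (pq k h' (j+1)).1 = ((cN (h'-j) : ℝ))⁻¹ * ((pq k h' j).2 - 4*k*(pq k h' j).1) := rfl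
    have e2 : (pq k h' (j+1)).2 = ((dN (h'-j) : ℝ))⁻¹ * ((aN (h'-j) : ℝ)*(pq k h' j).1 - 4*k*(pq k h' j).2) := rfl
    have hp1 : 0 < (-1:ℝ)^(j+1) * (pq k h' (j+1)).1 := by
      rw [e1]
      have : (-1:ℝ)^(j+1) * (((cN (h'-j):ℝ))⁻¹ * ((pq k h' j).2 - 4*k*(pq k h' j).1))
          = ((cN (h'-j):ℝ))⁻¹ * ((-1:ℝ)^j * (4*k*(pq k h' j).1 - (pq k h' j).2)) := by
        rw [pow_succ]; ring
      rw [this]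
      positivity
    have hq1 : 0 ≤ (-1:ℝ)^(j+2) * (pq k h' (j+1)).2 := by
      rw [e2]
      have : (-1:ℝ)^(j+2) * (((dN (h'-j):ℝ))⁻¹ * ((aN (h'-j):ℝ)*(pq k h' j).1 - 4*k*(pq k h' j).2))
          = ((dN (h'-j):ℝ))⁻¹ * ((aN (h'-j):ℝ) * ((-1:ℝ)^j * (pq k h' j).1)
              + 4*k*((-1:ℝ)^(j+1) * (pq k h' j).2)) := by
        rw [pow_succ, pow_succ]; ring
      rw [this]
      positivity
    refine ⟨le_of_lt hp1, hq1, ?_⟩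
    have : (-1:ℝ)^(j+1) * (4*k*(pq k h' (j+1)).1 - (pq k h' (j+1)).2)
        = 4*k*((-1:ℝ)^(j+1) * (pq k h' (j+1)).1) + (-1:ℝ)^(j+2) * (pq k h' (j+1)).2 := by
      rw [pow_succ ((-1:ℝ)) (j+1)]; ring
    rw [this]
    positivity

lemma PQ_eval_neg (h' : ℕ) (θ : ℂ) (j : ℕ) :
    Polynomial.eval (-θ) (PQ h' j).1 = (-1)^j * Polynomial.eval θ (PQ h' j).1 ∧
    Polynomial.eval (-θ) (PQ h' j).2 = (-1)^(j+1) * Polynomial.eval θ (PQ h' j).2 := by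
  induction j with
  | zero => simp [PQ]
  | succ j ih =>
    obtain ⟨ih1, ih2⟩ := ih
    constructor
    · simp only [PQ, Polynomial.eval_mul, Polynomial.eval_C, Polynomial.eval_sub,
        Polynomial.eval_X, ih1, ih2, pow_succ]
      ring
    · simp only [PQ, Polynomial.eval_mul, Polynomial.eval_C, Polynomial.eval_add,
        Polynomial.eval_X, ih1, ih2, pow_succ]
      ring

lemma PQ_eval_zero (h' : ℕ) :
    ∀ j, j ≤ h' → (Even j → Polynomial.eval 0 (PQ h' j).1 ≠ 0 ∧ Polynomial.eval 0 (PQ h' j).2 = 0) ∧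
      (Odd j → Polynomial.eval 0 (PQ h' j).1 = 0 ∧ Polynomial.eval 0 (PQ h' j).2 ≠ 0) := by
  intro j
  induction j with
  | zero => intro _; constructor
            · intro _; simp [PQ]
            · intro h; exact absurd h (by simp)
  | succ j ih =>
    intro hj
    have hd : ((dN (h'-j) : ℂ)) ≠ 0 := Nat.cast_ne_zero.mpr (dN_pos _).ne'
    have ha : ((aN (h'-j) : ℂ)) ≠ 0 := Nat.cast_ne_zero.mpr (aN_pos _).ne'
    have hc : ((cN (h'-j) : ℂ)) ≠ 0 := by
      have : 0 < h' - j := by omega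
      exact Nat.cast_ne_zero.mpr (cN_pos this).ne'
    have e1 : Polynomial.eval 0 (PQ h' (j+1)).1
        = ((cN (h'-j) : ℂ))⁻¹ * (Polynomial.eval 0 (PQ h' j).2) := by
      simp [PQ]
    have e2 : Polynomial.eval 0 (PQ h' (j+1)).2
        = -((dN (h'-j) : ℂ))⁻¹ * ((aN (h'-j) : ℂ) * Polynomial.eval 0 (PQ h' j).1) := by
      simp [PQ]
    constructor
    · intro hev
      have hodd : Odd j := by
        rw [Nat.even_add_one] at hev; exact Nat.not_even_iff_odd.mp hev
      obtain ⟨hP, hQ⟩ := (ih (by omega)).2 hodd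
      refine ⟨?_, ?_⟩
      · rw [e1]; exact mul_ne_zero (inv_ne_zero hc) hQ
      · rw [e2, hP]; ring
    · intro hodd
      have hev : Even j := by
        have := Nat.Odd.sub_odd hodd (by norm_num : Odd 1)
        simpa using this
      obtain ⟨hP, hQ⟩ := (ih (by omega)).1 hev
      refine ⟨?_, ?_⟩
      · rw [e1, hQ]; ring
      · rw [e2]
        exact mul_ne_zero (neg_ne_zero.mpr (inv_ne_zero hd)) (mul_ne_zero ha hP)

lemma Qtop_eval_zero (h' : ℕ) :
    (Even h' → Polynomial.eval 0 (PQ h' (h'+1)).2 ≠ 0) ∧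
    (Odd h' → Polynomial.eval 0 (PQ h' (h'+1)).2 = 0) := by
  have hd : ((dN (h'-h') : ℂ)) ≠ 0 := Nat.cast_ne_zero.mpr (dN_pos _).ne'
  have ha : ((aN (h'-h') : ℂ)) ≠ 0 := Nat.cast_ne_zero.mpr (aN_pos _).ne'
  have e2 : Polynomial.eval 0 (PQ h' (h'+1)).2
      = -((dN (h'-h') : ℂ))⁻¹ * ((aN (h'-h') : ℂ) * Polynomial.eval 0 (PQ h' h').1) := by
    simp [PQ]
  constructor
  · intro hev
    obtain ⟨hP, _⟩ := (PQ_eval_zero h' h' le_rfl).1 hev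
    rw [e2]
    exact mul_ne_zero (neg_ne_zero.mpr (inv_ne_zero hd)) (mul_ne_zero ha hP)
  · intro hodd
    obtain ⟨hP, _⟩ := (PQ_eval_zero h' h' le_rfl).2 hodd
    rw [e2, hP]; ring

noncomputable def D1 (h' : ℕ) : Polynomial ℂ := (PQ h' h').2 - Polynomial.X * (PQ h' h').1
noncomputable def Qh (h' : ℕ) : Polynomial ℂ := (PQ h' (h'+1)).2

lemma D1_eval_pos_ne (h' : ℕ) {k : ℝ} (hk : 0 < k) :
    Polynomial.eval (((4*k : ℝ) : ℂ) * Complex.I) (D1 h') ≠ 0 := by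
  obtain ⟨e1, e2⟩ := PQ_eval_I h' k h'
  have key : Polynomial.eval (((4*k : ℝ) : ℂ) * Complex.I) (D1 h')
      = Complex.I ^ (h'+1) * (((pq k h' h').2 - 4*k*(pq k h' h').1 : ℝ) : ℂ) := by
    simp only [D1, Polynomial.eval_sub, Polynomial.eval_mul, Polynomial.eval_X, e1, e2]
    push_cast
    rw [pow_succ]
    ring
  rw [key]
  refine mul_ne_zero (pow_ne_zero _ Complex.I_ne_zero) ?_
  rw [Complex.ofReal_ne_zero]
  have h3 := (pq_sign h' hk h' le_rfl).2.2
  intro hz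
  have : (4*k*(pq k h' h').1 - (pq k h' h').2) = 0 := by linarith [sub_eq_zero.mp hz]
  rw [this, mul_zero] at h3
  exact lt_irrefl _ h3

lemma D1_eval_neg_ne (h' : ℕ) {k : ℝ} (hk : 0 < k) :
    Polynomial.eval (-(((4*k : ℝ) : ℂ) * Complex.I)) (D1 h') ≠ 0 := by
  obtain ⟨e1, e2⟩ := PQ_eval_neg h' (((4*k : ℝ) : ℂ) * Complex.I) h'
  have key : Polynomial.eval (-(((4*k : ℝ) : ℂ) * Complex.I)) (D1 h')
      = (-1)^(h'+1) * Polynomial.eval (((4*k : ℝ) : ℂ) * Complex.I) (D1 h') := by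
    simp only [D1, Polynomial.eval_sub, Polynomial.eval_mul, Polynomial.eval_X, e1, e2, pow_succ]
    ring
  rw [key]
  exact mul_ne_zero (pow_ne_zero _ (by norm_num)) (D1_eval_pos_ne h' hk)

lemma no_common_root (h' : ℕ) (θ : ℂ) (h1 : Polynomial.eval θ (D1 h') = 0)
    (h2 : Polynomial.eval θ (Qh h') = 0) : False := by
  by_cases hex : ∃ t, t ≤ h' ∧ θ^2 = -((aN t : ℂ))
  · obtain ⟨t, _, hθ⟩ := hex
    set k : ℝ := ((2*t+2 : ℕ) : ℝ) with hkdef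
    have hk : 0 < k := by positivity
    have hw : θ^2 = (((4*k : ℝ) : ℂ) * Complex.I)^2 := by
      rw [hθ]
      have : (((4*k : ℝ) : ℂ) * Complex.I)^2 = -(((4*k:ℝ):ℂ)^2) := by
        rw [mul_pow, Complex.I_sq]; ring
      rw [this, hkdef]
      push_cast [aN]
      ring
    have : (θ - ((4*k : ℝ) : ℂ) * Complex.I) * (θ + ((4*k : ℝ) : ℂ) * Complex.I) = 0 := by
      linear_combination hw
    rcases mul_eq_zero.mp this with h | h
    · exact D1_eval_pos_ne h' hk (by rwa [← sub_eq_zero.mp h])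
    · have hθn : θ = -(((4*k : ℝ) : ℂ) * Complex.I) := eq_neg_of_add_eq_zero_left h
      exact D1_eval_neg_ne h' hk (by rwa [← hθn])
  · push_neg at hex
    have hQexp : Polynomial.eval θ (Qh h')
        = -((dN 0 : ℂ))⁻¹ * (θ * Polynomial.eval θ (PQ h' h').2
            + (aN 0 : ℂ) * Polynomial.eval θ (PQ h' h').1) := by
      simp [Qh, PQ, Nat.sub_self]
    have hd0 : ((dN 0 : ℂ)) ≠ 0 := Nat.cast_ne_zero.mpr (dN_pos _).ne'
    have hQP : Polynomial.eval θ (PQ h' h').2 = θ * Polynomial.eval θ (PQ h' h').1 := by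
      have := h1
      simp only [D1, Polynomial.eval_sub, Polynomial.eval_mul, Polynomial.eval_X] at this
      linear_combination this
    have hsum : θ * Polynomial.eval θ (PQ h' h').2 + (aN 0 : ℂ) * Polynomial.eval θ (PQ h' h').1 = 0 := by
      rw [hQexp] at h2
      rcases mul_eq_zero.mp h2 with h | h
      · exact absurd h (neg_ne_zero.mpr (inv_ne_zero hd0))
      · exact h
    have hPtop : Polynomial.eval θ (PQ h' h').1 = 0 := by
      have hfac : (θ^2 + (aN 0 : ℂ)) * Polynomial.eval θ (PQ h' h').1 = 0 := by
        rw [hQP] at hsum; linear_combination hsum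
      rcases mul_eq_zero.mp hfac with h | h
      · exact absurd (by linear_combination h) (hex 0 (Nat.zero_le _))
      · exact h
    have hQtop : Polynomial.eval θ (PQ h' h').2 = 0 := by rw [hQP, hPtop, mul_zero]
    have down : ∀ d, d ≤ h' → Polynomial.eval θ (PQ h' (h'-d)).1 = 0
        ∧ Polynomial.eval θ (PQ h' (h'-d)).2 = 0 := by
      intro d
      induction d with
      | zero => intro _; simpa using ⟨hPtop, hQtop⟩
      | succ d ihd =>
        intro hd
        obtain ⟨j, hj1, hj2⟩ : ∃ j, h' - d = j + 1 ∧ h' - (d+1) = j := by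
          refine ⟨h' - (d+1), by omega, rfl⟩
        obtain ⟨iP, iQ⟩ := ihd (by omega)
        rw [hj1] at iP iQ
        rw [hj2]
        have hsub : h' - j = d + 1 := by omega
        have hc : ((cN (h'-j) : ℂ)) ≠ 0 := by
          rw [hsub]; exact Nat.cast_ne_zero.mpr (cN_pos (by omega)).ne'
        have e1 : Polynomial.eval θ (PQ h' (j+1)).1
            = ((cN (h'-j) : ℂ))⁻¹ * (Polynomial.eval θ (PQ h' j).2 - θ * Polynomial.eval θ (PQ h' j).1) := by
          simp [PQ]
        have e2 : Polynomial.eval θ (PQ h' (j+1)).2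
            = -((dN (h'-j) : ℂ))⁻¹ * (θ * Polynomial.eval θ (PQ h' j).2
                + (aN (h'-j) : ℂ) * Polynomial.eval θ (PQ h' j).1) := by
          simp [PQ]
        have hdj : ((dN (h'-j) : ℂ)) ≠ 0 := Nat.cast_ne_zero.mpr (dN_pos _).ne'
        have hQj : Polynomial.eval θ (PQ h' j).2 = θ * Polynomial.eval θ (PQ h' j).1 := by
          rw [e1] at iP
          rcases mul_eq_zero.mp iP with h | h
          · exact absurd h (inv_ne_zero hc)
          · linear_combination h
        have hsumj : θ * Polynomial.eval θ (PQ h' j).2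
            + (aN (h'-j) : ℂ) * Polynomial.eval θ (PQ h' j).1 = 0 := by
          rw [e2] at iQ
          rcases mul_eq_zero.mp iQ with h | h
          · exact absurd h (neg_ne_zero.mpr (inv_ne_zero hdj))
          · exact h
        have hPj : Polynomial.eval θ (PQ h' j).1 = 0 := by
          have hfac : (θ^2 + (aN (h'-j) : ℂ)) * Polynomial.eval θ (PQ h' j).1 = 0 := by
            rw [hQj] at hsumj; linear_combination hsumj
          rcases mul_eq_zero.mp hfac with h | h
          · exact absurd (by linear_combination h) (hex (h'-j) (by omega))
          · exact h
        exact ⟨hPj, by rw [hQj, hPj, mul_zero]⟩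
    have := (down h' le_rfl).1
    rw [Nat.sub_self] at this
    simp [PQ] at this

lemma bezout (h' : ℕ) : ∃ u v : Polynomial ℂ, u * D1 h' + v * Qh h' = 1 := by
  set dd := EuclideanDomain.gcd (D1 h') (Qh h') with hdd
  have hne : D1 h' ≠ 0 ∨ Qh h' ≠ 0 := by
    rcases Nat.even_or_odd h' with hev | hodd
    · right
      intro h0
      have := (Qtop_eval_zero h').1 hev
      rw [show (PQ h' (h'+1)).2 = Qh h' from rfl, h0] at this
      simp at this
    · left
      intro h0
      have hQ0 := ((PQ_eval_zero h' h' le_rfl).2 hodd).2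
      have : Polynomial.eval 0 (D1 h') = Polynomial.eval 0 (PQ h' h').2 := by
        simp [D1]
      rw [h0] at this
      simp at this
      exact hQ0 this.symm
  have hu : IsUnit dd := by
    by_contra hnu
    have hdd0 : dd ≠ 0 := by
      intro h0
      rw [hdd, EuclideanDomain.gcd_eq_zero_iff] at h0
      rcases hne with h | h
      · exact h h0.1
      · exact h h0.2
    have hdeg : 0 < dd.degree := Polynomial.degree_pos_of_ne_zero_of_nonunit hdd0 hnu
    obtain ⟨θ, hθ⟩ := Complex.exists_root hdeg
    obtain ⟨e1, he1⟩ := EuclideanDomain.gcd_dvd_left (D1 h') (Qh h')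
    obtain ⟨e2, he2⟩ := EuclideanDomain.gcd_dvd_right (D1 h') (Qh h')
    refine no_common_root h' θ ?_ ?_
    · rw [he1, Polynomial.eval_mul, hθ, zero_mul]
    · rw [he2, Polynomial.eval_mul, hθ, zero_mul]
  obtain ⟨w, hw⟩ := hu
  have hab := EuclideanDomain.gcd_eq_gcd_ab (D1 h') (Qh h')
  refine ⟨(↑w⁻¹ : Polynomial ℂ) * EuclideanDomain.gcdA (D1 h') (Qh h'),
          (↑w⁻¹ : Polynomial ℂ) * EuclideanDomain.gcdB (D1 h') (Qh h'), ?_⟩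
  have : (↑w⁻¹ : Polynomial ℂ) * dd = 1 := by
    rw [← hw, Units.inv_mul]
  calc (↑w⁻¹ : Polynomial ℂ) * EuclideanDomain.gcdA (D1 h') (Qh h') * D1 h'
        + (↑w⁻¹ : Polynomial ℂ) * EuclideanDomain.gcdB (D1 h') (Qh h') * Qh h'
      = (↑w⁻¹ : Polynomial ℂ) * (D1 h' * EuclideanDomain.gcdA (D1 h') (Qh h')
          + Qh h' * EuclideanDomain.gcdB (D1 h') (Qh h')) := by ring
    _ = (↑w⁻¹ : Polynomial ℂ) * dd := by rw [hdd, ← hab]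
    _ = 1 := this

lemma PQ_X_dvd (h' : ℕ) : ∀ j, (Odd j → ∃ S, (PQ h' j).1 = Polynomial.X * S) ∧
    (Even j → ∃ S, (PQ h' j).2 = Polynomial.X * S) := by
  intro j
  induction j with
  | zero => exact ⟨fun h => absurd h (by simp), fun _ => ⟨0, by simp [PQ]⟩⟩
  | succ j ih =>
    constructor
    · intro hodd
      have hev : Even j := by
        have := Nat.Odd.sub_odd hodd (by norm_num : Odd 1)
        simpa using this
      obtain ⟨S, hS⟩ := ih.2 hev
      refine ⟨Polynomial.C (((cN (h'-j) : ℂ))⁻¹) * (S - (PQ h' j).1), ?_⟩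
      show Polynomial.C (((cN (h'-j) : ℂ))⁻¹) * ((PQ h' j).2 - Polynomial.X * (PQ h' j).1) = _
      rw [hS]; ring
    · intro hev
      have hodd : Odd j := by
        rw [Nat.even_add_one] at hev; exact Nat.not_even_iff_odd.mp hev
      obtain ⟨S, hS⟩ := ih.1 hodd
      refine ⟨Polynomial.C (-((dN (h'-j) : ℂ))⁻¹) * ((PQ h' j).2 + Polynomial.C ((aN (h'-j) : ℂ)) * S), ?_⟩
      show Polynomial.C (-((dN (h'-j) : ℂ))⁻¹) * (Polynomial.X * (PQ h' j).2 + Polynomial.C ((aN (h'-j) : ℂ)) * (PQ h' j).1) = _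
      rw [hS]; ring

noncomputable abbrev Phi : Polynomial ℂ →ₐ[ℂ] MvPolynomial (Fin 2) ℂ :=
  Polynomial.aeval (X 0 : MvPolynomial (Fin 2) ℂ)

lemma Phi_C (c : ℂ) : Phi (Polynomial.C c) = C c := by
  simp [Phi, Polynomial.aeval_C, MvPolynomial.algebraMap_eq]

lemma Xstep (h' j s : ℕ) (hjs : h' - j = s)
    (h1 : X 1^j * zp (2*s+1) - Phi (PQ h' j).1 * zp (2*h'+1) ∈ Jp (2*h'+2))
    (h2 : X 1^j * zp (2*s+2) - Phi (PQ h' j).2 * zp (2*h'+1) ∈ Jp (2*h'+2))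
    (hG : X 1^j * zp (2*s+3) ∈ Jp (2*h'+2)) :
    X 1^(j+1) * zp (2*s) - Phi (PQ h' (j+1)).2 * zp (2*h'+1) ∈ Jp (2*h'+2) := by
  set J := Jp (2*h'+2)
  set B0 := zp (2*h'+1)
  have hφ : Phi (PQ h' (j+1)).2
      = -C (((dN s : ℂ))⁻¹) * (X 0 * Phi (PQ h' j).2 + C ((aN s : ℂ)) * Phi (PQ h' j).1) := by
    show Phi (Polynomial.C (-((dN (h'-j) : ℂ))⁻¹) * (Polynomial.X * (PQ h' j).2
        + Polynomial.C ((aN (h'-j) : ℂ)) * (PQ h' j).1)) = _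
    rw [hjs]
    simp only [map_mul, map_add, Polynomial.aeval_X, Phi_C, map_neg]
  have hdd : (C ((dN s : ℂ)) : MvPolynomial (Fin 2) ℂ) * C (((dN s : ℂ))⁻¹) = 1 := by
    rw [← C_mul, mul_inv_cancel₀ (dN_ne s), C_1]
  apply mem_of_C_mul (dN_ne s)
  have key : C ((dN s : ℂ)) * (X 1^(j+1) * zp (2*s) - Phi (PQ h' (j+1)).2 * B0)
      = X 1^j * zp (2*s+3) - X 0 * (X 1^j * zp (2*s+2) - Phi (PQ h' j).2 * B0)
        - C ((aN s : ℂ)) * (X 1^j * zp (2*s+1) - Phi (PQ h' j).1 * B0) := by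
    rw [hφ]
    linear_combination (-1 : MvPolynomial (Fin 2) ℂ) * (Eident j s) + (X 0 * Phi (PQ h' j).2 + C ((aN s : ℂ)) * Phi (PQ h' j).1) * B0 * hdd
  rw [key]
  exact sub_mem (sub_mem hG (Ideal.mul_mem_left J _ h2)) (Ideal.mul_mem_left J _ h1)

lemma TL (h' : ℕ) : ∀ j t, j + t = h' →
    (X 1^j * zp (2*t+1) - Phi (PQ h' j).1 * zp (2*h'+1) ∈ Jp (2*h'+2)) ∧
    (X 1^j * zp (2*t+2) - Phi (PQ h' j).2 * zp (2*h'+1) ∈ Jp (2*h'+2)) := by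
  set J := Jp (2*h'+2) with hJdef
  set B0 := zp (2*h'+1) with hB0def
  intro j
  induction j with
  | zero =>
    intro t ht
    have ht' : t = h' := by omega
    rw [ht']
    constructor
    · have : X 1^0 * zp (2*h'+1) - Phi (PQ h' 0).1 * B0 = 0 := by
        show X 1^0 * zp (2*h'+1) - Phi (1 : Polynomial ℂ) * B0 = 0
        rw [map_one, hB0def]; ring
      rw [this]; exact zero_mem J
    · have : X 1^0 * zp (2*h'+2) - Phi (PQ h' 0).2 * B0 = zp (2*h'+2) := by
        show X 1^0 * zp (2*h'+2) - Phi (0 : Polynomial ℂ) * B0 = zp (2*h'+2)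
        rw [map_zero]; ring
      rw [this]; exact zp_mem_Jp _
  | succ j ih =>
    intro t ht
    obtain ⟨i1, i2⟩ := ih (t+1) (by omega)
    rw [show 2*(t+1)+1 = 2*t+3 by omega] at i1
    rw [show 2*(t+1)+2 = 2*t+4 by omega] at i2
    have hsub : h' - j = t+1 := by omega
    constructor
    · -- B-part via Oident j t
      have hφ : Phi (PQ h' (j+1)).1
          = C (((cN (t+1) : ℂ))⁻¹) * (Phi (PQ h' j).2 - X 0 * Phi (PQ h' j).1) := by
        show Phi (Polynomial.C (((cN (h'-j) : ℂ))⁻¹) * ((PQ h' j).2 - Polynomial.X * (PQ h' j).1)) = _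
        rw [hsub]
        simp only [map_mul, map_sub, Polynomial.aeval_X, Phi_C]
      have hcc : (C ((cN (t+1) : ℂ)) : MvPolynomial (Fin 2) ℂ) * C (((cN (t+1) : ℂ))⁻¹) = 1 := by
        rw [← C_mul, mul_inv_cancel₀ (cN_ne t), C_1]
      apply mem_of_C_mul (cN_ne t)
      have key : C ((cN (t+1) : ℂ)) * (X 1^(j+1) * zp (2*t+1) - Phi (PQ h' (j+1)).1 * B0)
          = (X 1^j * zp (2*t+4) - Phi (PQ h' j).2 * B0)
            - X 0 * (X 1^j * zp (2*t+3) - Phi (PQ h' j).1 * B0) := by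
        rw [hφ]
        linear_combination (-1 : MvPolynomial (Fin 2) ℂ) * (Oident j t)
          - (Phi (PQ h' j).2 - X 0 * Phi (PQ h' j).1) * B0 * hcc
      rw [key]
      exact sub_mem i2 (Ideal.mul_mem_left J _ i1)
    · -- X-part via Xstep at s = t+1
      have hG : X 1^j * zp (2*(t+1)+3) ∈ J := by
        have := (Lfact h' j (t+1) (by omega)).2.2
        exact this
      have := Xstep h' j (t+1) hsub
        (by rwa [show 2*(t+1)+1 = 2*t+3 by omega])
        (by rwa [show 2*(t+1)+2 = 2*t+4 by omega])
        (by rwa [show 2*(t+1)+3 = 2*t+5 by omega] at hG)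
      rwa [show 2*(t+1) = 2*t+2 by omega] at this

lemma alphaB0_mem (h' : ℕ) : X 0 * zp (2*h'+1) ∈ Jp (2*h'+2) := by
  set J := Jp (2*h'+2) with hJdef
  set B0 := zp (2*h'+1) with hB0def
  obtain ⟨i1, i2⟩ := TL h' h' 0 (by omega)
  have hzp2 : (zp 2 : MvPolynomial (Fin 2) ℂ) = X 0 * zp 1 := rfl
  have hzp1 : (zp 1 : MvPolynomial (Fin 2) ℂ) = X 0 := rfl
  have hzp0 : (zp 0 : MvPolynomial (Fin 2) ℂ) = 1 := rfl
  have hφD : Phi (D1 h') = Phi (PQ h' h').2 - X 0 * Phi (PQ h' h').1 := by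
    simp only [D1, map_sub, map_mul, Polynomial.aeval_X]
  have hD1 : Phi (D1 h') * B0 ∈ J := by
    have key : Phi (D1 h') * B0
        = -(X 1^h' * zp (2*0+2) - Phi (PQ h' h').2 * B0)
          + X 0 * (X 1^h' * zp (2*0+1) - Phi (PQ h' h').1 * B0) := by
      rw [hφD]
      have h1' : zp (2*0+2) = X 0 * zp (2*0+1) := by norm_num [hzp2, hzp1]
      linear_combination (X 1^h' : MvPolynomial (Fin 2) ℂ) * h1'
    rw [key]
    exact add_mem (neg_mem i2) (Ideal.mul_mem_left J _ i1)
  have hTLX : X 1^(h'+1) * zp (2*0) - Phi (Qh h') * B0 ∈ J := by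
    have hG : X 1^h' * zp (2*0+3) ∈ J := (Lfact h' h' 0 (by omega)).2.2
    exact Xstep h' h' 0 (by omega) i1 i2 hG
  have hL1 : X 1^(h'+1) * zp (2*0+1) ∈ J := (Lfact h' h' 0 (by omega)).1
  have hD2 : X 0 * (Phi (Qh h') * B0) ∈ J := by
    have key : X 0 * (Phi (Qh h') * B0)
        = -(X 0 * (X 1^(h'+1) * zp (2*0) - Phi (Qh h') * B0)) + X 1^(h'+1) * zp (2*0+1) := by
      have e : X 0 * (X 1^(h'+1) * zp (2*0)) = X 1^(h'+1) * zp (2*0+1) := by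
        norm_num [hzp0, hzp1]; ring
      linear_combination e
    rw [key]
    exact add_mem (neg_mem (Ideal.mul_mem_left J _ hTLX)) hL1
  obtain ⟨u, v, huv⟩ := bezout h'
  have hmap : Phi u * Phi (D1 h') + Phi v * Phi (Qh h') = 1 := by
    have := congrArg Phi huv
    simpa only [map_add, map_mul, map_one] using this
  have key : X 0 * B0
      = (Phi u * X 0) * (Phi (D1 h') * B0) + Phi v * (X 0 * (Phi (Qh h') * B0)) := by
    linear_combination (-(X 0 * B0)) * hmap
  rw [key]
  exact add_mem (Ideal.mul_mem_left J _ hD1) (Ideal.mul_mem_left J _ hD2)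

lemma claimB (h' : ℕ) (i t : ℕ) (hit : i + t = h') :
    X 0 * (X 1^i * zp (2*t+1)) ∈ Jp (2*h'+2)
      ∧ (Odd i → X 1^i * zp (2*t+1) ∈ Jp (2*h'+2)) := by
  set J := Jp (2*h'+2) with hJdef
  set B0 := zp (2*h'+1) with hB0def
  obtain ⟨i1, _⟩ := TL h' i t (by omega)
  have hα := alphaB0_mem h'
  constructor
  · have key : X 0 * (X 1^i * zp (2*t+1))
        = X 0 * (X 1^i * zp (2*t+1) - Phi (PQ h' i).1 * B0) + Phi (PQ h' i).1 * (X 0 * B0) := by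
      ring
    rw [key]
    exact add_mem (Ideal.mul_mem_left J _ i1) (Ideal.mul_mem_left J _ hα)
  · intro hodd
    obtain ⟨S, hS⟩ := (PQ_X_dvd h' i).1 hodd
    have key : X 1^i * zp (2*t+1)
        = (X 1^i * zp (2*t+1) - Phi (PQ h' i).1 * B0) + Phi S * (X 0 * B0) := by
      rw [hS]
      simp only [map_mul, Polynomial.aeval_X]
      ring
    rw [key]
    exact add_mem i1 (Ideal.mul_mem_left J _ hα)

lemma zpZ_natCast (n : ℕ) : zpZ (n : ℤ) = zp n := by
  simp [zpZ]


/-- For g ≥ 0 even and every i ≥ 0: α·γ^i ζ_{g−2i−1}^+ ∈ J_g^+ if i is even, and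
    γ^i ζ_{g−2i−1}^+ ∈ J_g^+ if i is odd. In particular α·ζ_{g−1}^+ ∈ J_g^+ and
    α·J_{g−1}^+ ⊆ J_g^+. -/
theorem Jp_even_memberships (g : ℕ) (heven : Even g) :
    (∀ i : ℕ,
      (Even i → (X 0 : MvPolynomial (Fin 2) ℂ) * (X 1 : MvPolynomial (Fin 2) ℂ) ^ i
          * zpZ ((g : ℤ) - 2 * i - 1) ∈ Jp g) ∧
      (Odd i → (X 1 : MvPolynomial (Fin 2) ℂ) ^ i * zpZ ((g : ℤ) - 2 * i - 1) ∈ Jp g)) ∧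
    (X 0 : MvPolynomial (Fin 2) ℂ) * zpZ ((g : ℤ) - 1) ∈ Jp g ∧
    (∀ f ∈ JpZ ((g : ℤ) - 1), (X 0 : MvPolynomial (Fin 2) ℂ) * f ∈ Jp g) := by
  obtain ⟨m, rfl⟩ := heven
  rcases Nat.eq_zero_or_pos m with rfl | hm
  · have htop : (1 : MvPolynomial (Fin 2) ℂ) ∈ Jp (0+0) := by
      have h0 : zp 0 ∈ Jp 0 := zp_mem_Jp 0
      simpa [zp] using h0
    have hJ : ∀ x : MvPolynomial (Fin 2) ℂ, x ∈ Jp (0+0) := fun x => by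
      simpa using Ideal.mul_mem_left _ x htop
    exact ⟨fun i => ⟨fun _ => hJ _, fun _ => hJ _⟩, hJ _, fun f _ => hJ _⟩
  · obtain ⟨h', rfl⟩ : ∃ h', m = h'+1 := ⟨m-1, by omega⟩
    rw [show (h'+1) + (h'+1) = 2*h'+2 by omega]
    set J := Jp (2*h'+2) with hJdef
    refine ⟨?_, ?_, ?_⟩
    · intro i
      by_cases hi : i ≤ h'
      · have hit : i + (h' - i) = h' := by omega
        have hidx : ((2*h'+2 : ℕ) : ℤ) - 2*i - 1 = ((2*(h'-i)+1 : ℕ) : ℤ) := by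
          push_cast; omega
        constructor
        · intro _
          rw [hidx, zpZ_natCast, mul_assoc]
          exact (claimB h' i (h'-i) hit).1
        · intro hodd
          rw [hidx, zpZ_natCast]
          exact (claimB h' i (h'-i) hit).2 hodd
      · have hneg : ((2*h'+2 : ℕ) : ℤ) - 2*i - 1 < 0 := by push_cast; omega
        have hz : zpZ (((2*h'+2 : ℕ) : ℤ) - 2*i - 1) = 0 := by
          rw [zpZ, if_pos hneg]
        rw [hz]
        exact ⟨fun _ => by rw [mul_zero]; exact zero_mem J, fun _ => by rw [mul_zero]; exact zero_mem J⟩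
    · have hidx : ((2*h'+2 : ℕ) : ℤ) - 1 = ((2*h'+1 : ℕ) : ℤ) := by push_cast; omega
      rw [hidx, zpZ_natCast]
      exact alphaB0_mem h'
    · intro f hf
      have hsub : JpZ (((2*h'+2 : ℕ) : ℤ) - 1)
          ≤ Submodule.comap (LinearMap.mulLeft (MvPolynomial (Fin 2) ℂ) (X 0)) J := by
        rw [JpZ]
        refine Ideal.span_le.mpr ?_
        intro x hx
        simp only [Set.mem_insert_iff, Set.mem_singleton_iff] at hx
        have e1 : (((2*h'+2 : ℕ) : ℤ) - 1) = ((2*h'+1 : ℕ) : ℤ) := by push_cast; omega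
        have e2 : (((2*h'+2 : ℕ) : ℤ) - 1 + 1) = ((2*h'+2 : ℕ) : ℤ) := by omega
        have e3 : (((2*h'+2 : ℕ) : ℤ) - 1 + 2) = ((2*h'+3 : ℕ) : ℤ) := by push_cast; omega
        rcases hx with rfl | rfl | rfl
        · rw [e1, zpZ_natCast]
          simp only [SetLike.mem_coe, Submodule.mem_comap, LinearMap.mulLeft_apply]
          exact alphaB0_mem h'
        · rw [e2, zpZ_natCast]
          simp only [SetLike.mem_coe, Submodule.mem_comap, LinearMap.mulLeft_apply]
          exact Ideal.mul_mem_left J _ (zp_mem_Jp _)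
        · rw [e3, zpZ_natCast]
          simp only [SetLike.mem_coe, Submodule.mem_comap, LinearMap.mulLeft_apply]
          have := zp1_mem_Jp (2*h'+2)
          rw [show 2*h'+2+1 = 2*h'+3 by omega] at this
          exact Ideal.mul_mem_left J _ this
      have := hsub hf
      simpa only [Submodule.mem_comap, LinearMap.mulLeft_apply] using this
end

section
/- Let g ≥ 1 be odd. Then the ideal J_g^+ of ℂ[α,γ] is generated by the set {ζ_g^+, γ ζ_{g−2}^+, γ² ζ_{g−4}^+, …, γ^{(g−1)/2} ζ_1^+, γ^{(g+1)/2}}, and the residue classes of the monomials α^j γ^i with 0 ≤ i ≤ (g−1)/2 and 0 ≤ j ≤ g − 2i − 1 form a ℂ-vector space basis of the quotient ring ℂ[α,γ]/J_g^+. -/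
/-!
Write `g = 2m + 1` and give `α = X 0` weight 1 and `γ = X 1` weight 2. The recurrence gives
`J_1 = (ζ_1) + (γ)` and `J_{2m+3} = (ζ_{2m+3}) + γ J_{2m+1}`; unrolled, this is the first claim.

Setting `γ = 0` turns `ζ_k` into a monic polynomial of degree `k` in `α`. For an ideal
`(p) + γ K` with `p ∈ K` and `p(α, 0)` monic of degree `k` this has two consequences: an element
of weight `< k` lies in it only if it is `γ f'` with `f' ∈ K` of weight `< k - 2` (compare
degrees at `γ = 0`), and every polynomial is congruent to one of weight `< k` (divide by
`p(α, 0)` with remainder and recurse on the multiple of `γ` that is left). By induction on `m`,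
the monomials of weight `< g` span a complement of `J_g`, so their classes form a basis.
-/

open MvPolynomial

open scoped Polynomial

lemma mem_span_triple_of_eq {A : Type*} [CommRing A] {x a b c : A} (u v w : A)
    (h : x = u * a + v * b + w * c) : x ∈ Ideal.span {a, b, c} := by
  rw [h]
  refine add_mem (add_mem ?_ ?_) ?_ <;> exact Ideal.mul_mem_left _ _ (Ideal.subset_span (by simp))

lemma mem_span_singleton_sup_span_singleton_mul {A : Type*} [CommRing A] {x p y : A}
    {K : Ideal A} (a j : A) (hj : j ∈ K) (h : x = a * p + y * j) :
    x ∈ Ideal.span {p} ⊔ Ideal.span {y} * K :=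
  Ideal.mem_span_singleton_sup.mpr ⟨a, y * j, Ideal.mem_span_singleton_mul.mpr ⟨j, hj, rfl⟩, h.symm⟩

lemma MvPolynomial.C_mul_C_inv {σ F : Type*} [Field F] {c : F} (hc : c ≠ 0) :
    (C c * C c⁻¹ : MvPolynomial σ F) = 1 := by
  rw [← C_mul, mul_inv_cancel₀ hc, C_1]

noncomputable def quotientBasisOfIsCompl {R : Type*} [CommRing R] {σ : Type*}
    {s : Set (σ →₀ ℕ)} {I : Ideal (MvPolynomial σ R)}
    (h : IsCompl (restrictSupport R s) (I.restrictScalars R)) :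
    Module.Basis s R (MvPolynomial σ R ⧸ I) :=
  ((basisRestrictSupport R s).map (Submodule.quotientEquivOfIsCompl _ _ h.symm).symm).map
    (Submodule.Quotient.restrictScalarsEquiv R I)

lemma quotientBasisOfIsCompl_apply {R : Type*} [CommRing R] {σ : Type*}
    {s : Set (σ →₀ ℕ)} {I : Ideal (MvPolynomial σ R)}
    (h : IsCompl (restrictSupport R s) (I.restrictScalars R)) (d : s) :
    quotientBasisOfIsCompl h d = Ideal.Quotient.mk I (monomial d 1) := by
  have hd : basisRestrictSupport R s d = ⟨monomial d 1, by simp⟩ := by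
    rw [Module.Basis.apply_eq_iff]
    ext i
    change coeff (i : σ →₀ ℕ) (monomial (d : σ →₀ ℕ) (1 : R)) = _
    classical
    rw [coeff_monomial, Finsupp.single_apply]
    exact if_congr Subtype.ext_iff.symm rfl rfl
  simp [quotientBasisOfIsCompl, hd]

section TwoVariables

variable {R : Type*} [CommRing R]

def weightLT (k : ℕ) : Set (Fin 2 →₀ ℕ) := {d | d 0 + 2 * d 1 < k}

lemma monomial_eq_X0_pow_mul_X1_pow (d : Fin 2 →₀ ℕ) :
    monomial d (1 : R) = X 0 ^ d 0 * X 1 ^ d 1 := by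
  rw [monomial_eq, C_1, one_mul, Finsupp.prod_fintype _ _ (fun _ => pow_zero _), Fin.prod_univ_two]

noncomputable def evalX1Zero : MvPolynomial (Fin 2) R →ₐ[R] R[X] := aeval ![Polynomial.X, 0]

@[simp] lemma evalX1Zero_X0 : evalX1Zero (X 0 : MvPolynomial (Fin 2) R) = Polynomial.X := by
  simp [evalX1Zero]

@[simp] lemma evalX1Zero_X1 : evalX1Zero (X 1 : MvPolynomial (Fin 2) R) = 0 := by
  simp [evalX1Zero]

@[simp] lemma evalX1Zero_aeval_X0 (r : R[X]) : evalX1Zero (Polynomial.aeval (X 0) r) = r := by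
  rw [← Polynomial.aeval_algHom_apply, evalX1Zero_X0, Polynomial.aeval_X_left_apply]

lemma sub_aeval_X0_evalX1Zero_mem (f : MvPolynomial (Fin 2) R) :
    f - Polynomial.aeval (X 0) (evalX1Zero f) ∈ Ideal.span {X 1} := by
  rw [← Ideal.Quotient.eq]
  suffices h : ((Ideal.Quotient.mkₐ R (Ideal.span {X 1})).comp
      ((Polynomial.aeval (X 0)).comp evalX1Zero)) = Ideal.Quotient.mkₐ R _ from
    (AlgHom.congr_fun h f).symm
  refine MvPolynomial.algHom_ext fun i => ?_
  fin_cases i <;> simp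

lemma mem_span_X1_of_evalX1Zero_eq_zero {f : MvPolynomial (Fin 2) R} (hf : evalX1Zero f = 0) :
    f ∈ Ideal.span {X 1} := by
  simpa [hf] using sub_aeval_X0_evalX1Zero_mem f

lemma degree_evalX1Zero_lt {k : ℕ} {f : MvPolynomial (Fin 2) R}
    (hf : f ∈ restrictSupport R (weightLT k)) : (evalX1Zero f).degree < k := by
  suffices h : restrictSupport R (weightLT k) ≤ (Polynomial.degreeLT R k).comap
      (evalX1Zero : MvPolynomial (Fin 2) R →ₐ[R] R[X]).toLinearMap from
    Polynomial.mem_degreeLT.mp (h hf)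
  rw [restrictSupport_eq_span, Submodule.span_le]
  rintro _ ⟨d, hd, rfl⟩
  dsimp only
  rw [monomial_eq_X0_pow_mul_X1_pow]
  simp only [SetLike.mem_coe, Submodule.mem_comap, AlgHom.toLinearMap_apply, map_mul, map_pow,
    evalX1Zero_X0, evalX1Zero_X1, Polynomial.mem_degreeLT]
  rcases Nat.eq_zero_or_pos (d 1) with h1 | h1
  · have hd0 : d 0 < k := by have : d 0 + 2 * d 1 < k := hd; omega
    rw [h1, pow_zero, mul_one]
    exact (Polynomial.degree_X_pow_le _).trans_lt (by exact_mod_cast hd0)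
  · rw [zero_pow h1.ne', mul_zero, Polynomial.degree_zero]
    exact WithBot.bot_lt_coe _

lemma aeval_X0_mem_restrictSupport {k : ℕ} {r : R[X]} (hr : r.degree < k) :
    Polynomial.aeval (X 0) r ∈ restrictSupport R (weightLT k) := by
  suffices h : Polynomial.degreeLT R k ≤ (restrictSupport R (weightLT k)).comap
      (Polynomial.aeval (X 0 : MvPolynomial (Fin 2) R)).toLinearMap from
    h (Polynomial.mem_degreeLT.mpr hr)
  classical
  rw [Polynomial.degreeLT_eq_span_X_pow, Submodule.span_le, Finset.coe_image]
  rintro _ ⟨i, hi, rfl⟩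
  simp only [SetLike.mem_coe, Submodule.mem_comap, AlgHom.toLinearMap_apply, map_pow,
    Polynomial.aeval_X, X_pow_eq_monomial, monomial_mem_restrictSupport]
  left
  simpa [weightLT] using hi

-- `k - 2` truncates: for `k ≤ 2` both sides say `f = 0`.
lemma X1_mul_mem_restrictSupport_iff {k : ℕ} {f : MvPolynomial (Fin 2) R} :
    X 1 * f ∈ restrictSupport R (weightLT k) ↔ f ∈ restrictSupport R (weightLT (k - 2)) := by
  classical
  simp only [mem_restrictSupport_iff, support_X_mul, Finset.coe_map, Set.image_subset_iff]
  refine forall₂_congr fun d _ => ?_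
  simp [weightLT]
  omega

lemma restrictSupport_weightLT_zero : restrictSupport R (weightLT 0) = ⊥ := by
  have h : weightLT 0 = ∅ := Set.eq_empty_of_forall_notMem fun d hd => Nat.not_lt_zero _ hd
  rw [eq_bot_iff]
  intro f hf
  rwa [mem_restrictSupport_iff, h, Set.subset_empty_iff, Finset.coe_eq_empty,
    support_eq_empty] at hf

variable {p : MvPolynomial (Fin 2) R} {K : Ideal (MvPolynomial (Fin 2) R)} {k : ℕ}

lemma exists_eq_X1_mul_of_mem_span_sup {f : MvPolynomial (Fin 2) R} (hpK : p ∈ K)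
    (hp : (evalX1Zero p).Monic) (hf : f ∈ Ideal.span {p} ⊔ Ideal.span {X 1} * K)
    (hdeg : (evalX1Zero f).degree < (evalX1Zero p).degree) : ∃ f' ∈ K, f = X 1 * f' := by
  obtain ⟨a, b, hb, rfl⟩ := Ideal.mem_span_singleton_sup.mp hf
  obtain ⟨c, hc, rfl⟩ := Ideal.mem_span_singleton_mul.mp hb
  have ha : evalX1Zero a = 0 := by
    by_contra ha
    simp only [map_add, map_mul, evalX1Zero_X1, zero_mul, add_zero, hp.degree_mul] at hdeg
    exact hdeg.not_ge (le_add_of_nonneg_left (Polynomial.zero_le_degree_iff.mpr ha))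
  obtain ⟨a', rfl⟩ := Ideal.mem_span_singleton.mp (mem_span_X1_of_evalX1Zero_eq_zero ha)
  exact ⟨a' * p + c, K.add_mem (K.mul_mem_left _ hpK) hc, by ring⟩

lemma disjoint_restrictSupport_span_sup (hpK : p ∈ K) (hp : (evalX1Zero p).Monic)
    (hk : (evalX1Zero p).degree = k)
    (hK : Disjoint (restrictSupport R (weightLT (k - 2))) (K.restrictScalars R)) :
    Disjoint (restrictSupport R (weightLT k))
      ((Ideal.span {p} ⊔ Ideal.span {X 1} * K).restrictScalars R) := by
  rw [Submodule.disjoint_def] at hK ⊢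
  intro f hf hfJ
  obtain ⟨f', hf'K, rfl⟩ :=
    exists_eq_X1_mul_of_mem_span_sup hpK hp hfJ (hk ▸ degree_evalX1Zero_lt hf)
  rw [hK f' (X1_mul_mem_restrictSupport_iff.mp hf) hf'K, mul_zero]

lemma codisjoint_restrictSupport_span_sup [Nontrivial R] (hp : (evalX1Zero p).Monic)
    (hk : (evalX1Zero p).degree = k)
    (hK : Codisjoint (restrictSupport R (weightLT (k - 2))) (K.restrictScalars R)) :
    Codisjoint (restrictSupport R (weightLT k))
      ((Ideal.span {p} ⊔ Ideal.span {X 1} * K).restrictScalars R) := by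
  rw [codisjoint_iff, Submodule.eq_top_iff'] at hK ⊢
  intro f
  set q := evalX1Zero f /ₘ evalX1Zero p
  set r := evalX1Zero f %ₘ evalX1Zero p
  have hrem : f - Polynomial.aeval (X 0) q * p - Polynomial.aeval (X 0) r ∈ Ideal.span {X 1} := by
    refine mem_span_X1_of_evalX1Zero_eq_zero ?_
    rw [map_sub, map_sub, map_mul, evalX1Zero_aeval_X0, evalX1Zero_aeval_X0,
      ← Polynomial.modByMonic_add_div (evalX1Zero f) (evalX1Zero p)]
    ring
  obtain ⟨h, hh⟩ := Ideal.mem_span_singleton'.mp hrem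
  obtain ⟨v, hv, j, hj, hvj⟩ := Submodule.mem_sup.mp (hK h)
  refine Submodule.mem_sup.mpr ⟨Polynomial.aeval (X 0) r + X 1 * v,
    add_mem (aeval_X0_mem_restrictSupport (hk ▸ Polynomial.degree_modByMonic_lt _ hp))
      (X1_mul_mem_restrictSupport_iff.mpr hv),
    Polynomial.aeval (X 0) q * p + X 1 * j,
    add_mem (Ideal.mem_sup_left (Ideal.mul_mem_left _ _ (Ideal.mem_span_singleton_self p)))
      (Ideal.mem_sup_right (Ideal.mul_mem_mul (Ideal.mem_span_singleton_self _) hj)), ?_⟩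
  rw [← hvj] at hh
  linear_combination hh

lemma isCompl_restrictSupport_span_sup [Nontrivial R] (hpK : p ∈ K)
    (hp : (evalX1Zero p).Monic) (hk : (evalX1Zero p).degree = k)
    (hK : IsCompl (restrictSupport R (weightLT (k - 2))) (K.restrictScalars R)) :
    IsCompl (restrictSupport R (weightLT k))
      ((Ideal.span {p} ⊔ Ideal.span {X 1} * K).restrictScalars R) :=
  ⟨disjoint_restrictSupport_span_sup hpK hp hk hK.1, codisjoint_restrictSupport_span_sup hp hk hK.2⟩

end TwoVariables

lemma zp_two_mul_add_three (k : ℕ) :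
    zp (2 * k + 3) = X 0 * zp (2 * k + 2) + C (16 * (2 * (k : ℂ) + 2) ^ 2) * zp (2 * k + 1)
      + C (2 * (2 * (k : ℂ) + 2) * (2 * (k : ℂ) + 1)) * X 1 * zp (2 * k) := by
  rw [zp, if_pos (by omega)]
  push_cast
  rfl

lemma zp_two_mul_add_four (k : ℕ) :
    zp (2 * k + 4) = X 0 * zp (2 * k + 3)
      + C (2 * (2 * (k : ℂ) + 3) * (2 * (k : ℂ) + 2)) * X 1 * zp (2 * k + 1) := by
  rw [show 2 * k + 4 = (2 * k + 1) + 3 by ring, zp, if_neg (by omega)]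
  push_cast
  ring_nf

lemma monic_evalX1Zero_zp_and_natDegree :
    ∀ k, (evalX1Zero (zp k)).Monic ∧ (evalX1Zero (zp k)).natDegree = k
  | 0 => by simp [zp]
  | 1 => by simp [zp]
  | 2 => by simp [zp, ← sq, Polynomial.monic_X_pow]
  | n + 3 => by
    obtain ⟨hmon, hdeg⟩ := monic_evalX1Zero_zp_and_natDegree (n + 2)
    obtain ⟨-, hdeg'⟩ := monic_evalX1Zero_zp_and_natDegree (n + 1)
    obtain ⟨c, hc⟩ : ∃ c : ℂ, evalX1Zero (zp (n + 3)) =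
        Polynomial.X * evalX1Zero (zp (n + 2)) + Polynomial.C c * evalX1Zero (zp (n + 1)) := by
      rw [zp]
      split_ifs
      · exact ⟨16 * ((n : ℂ) + 2) ^ 2, by simp⟩
      · exact ⟨0, by simp⟩
    have hlead : (Polynomial.X * evalX1Zero (zp (n + 2))).Monic := Polynomial.monic_X.mul hmon
    have hlead_deg : (Polynomial.X * evalX1Zero (zp (n + 2))).natDegree = n + 3 := by
      rw [Polynomial.monic_X.natDegree_mul hmon, hdeg, Polynomial.natDegree_X]
      ring
    have hlt : (Polynomial.C c * evalX1Zero (zp (n + 1))).degree <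
        (Polynomial.X * evalX1Zero (zp (n + 2))).degree :=
      Polynomial.degree_lt_degree ((Polynomial.natDegree_C_mul_le _ _).trans_lt (by omega))
    rw [hc]
    exact ⟨hlead.add_of_left hlt,
      by rw [Polynomial.natDegree_add_eq_left_of_degree_lt hlt, hlead_deg]⟩

lemma degree_evalX1Zero_zp (k : ℕ) : (evalX1Zero (zp k)).degree = k := by
  obtain ⟨hmon, hdeg⟩ := monic_evalX1Zero_zp_and_natDegree k
  rw [Polynomial.degree_eq_natDegree hmon.ne_zero, hdeg]

-- `⊤` stands for `J_{-1}` in the pattern of `Jp_two_mul_add_three`.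
lemma Jp_one : Jp 1 = Ideal.span {zp 1} ⊔ Ideal.span {X 1} * ⊤ := by
  have h3 : zp 3 = X 0 * zp 2 + C 64 * zp 1 + C 4 * X 1 := by
    have h := zp_two_mul_add_three 0
    norm_num at h
    rwa [show zp 0 = 1 from rfl, mul_one] at h
  apply le_antisymm
  · rw [Jp, Ideal.span_le]
    rintro _ (rfl | rfl | rfl)
    · exact mem_span_singleton_sup_span_singleton_mul 1 0 trivial (by ring)
    · exact mem_span_singleton_sup_span_singleton_mul (X 0) 0 trivial (by simp [zp])
    · exact mem_span_singleton_sup_span_singleton_mul (X 0 ^ 2 + C 64) (C 4) trivial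
        (by rw [h3]; simp [zp]; ring)
  · refine sup_le (Ideal.span_le.mpr (by simpa [Jp] using Ideal.subset_span (by simp)))
      (Ideal.mul_le_left.trans ?_)
    rw [Ideal.span_le, Set.singleton_subset_iff]
    refine mem_span_triple_of_eq (-(C 4⁻¹ * C 64)) (-(C 4⁻¹ * X 0)) (C 4⁻¹) ?_
    linear_combination (-C 4⁻¹) * h3 - X 1 * C_mul_C_inv (show (4 : ℂ) ≠ 0 by norm_num)

lemma Jp_two_mul_add_three (m : ℕ) :
    Jp (2 * m + 3) = Ideal.span {zp (2 * m + 3)} ⊔ Ideal.span {X 1} * Jp (2 * m + 1) := by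
  have h4 := zp_two_mul_add_four m
  have h5 := zp_two_mul_add_three (m + 1)
  push_cast at h5
  rw [show 2 * (m + 1) + 3 = 2 * m + 5 by ring, show 2 * (m + 1) + 2 = 2 * m + 4 by ring,
    show 2 * (m + 1) + 1 = 2 * m + 3 by ring, show 2 * (m + 1) = 2 * m + 2 by ring] at h5
  have hc : 2 * (2 * (m : ℂ) + 3) * (2 * (m : ℂ) + 2) ≠ 0 := by norm_cast
  have hc' : 2 * (2 * ((m : ℂ) + 1) + 2) * (2 * ((m : ℂ) + 1) + 1) ≠ 0 := by norm_cast
  set c := 2 * (2 * (m : ℂ) + 3) * (2 * (m : ℂ) + 2)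
  set c' := 2 * (2 * ((m : ℂ) + 1) + 2) * (2 * ((m : ℂ) + 1) + 1)
  have hJ : ∀ u v w,
      u * zp (2 * m + 1) + v * zp (2 * m + 2) + w * zp (2 * m + 3) ∈ Jp (2 * m + 1) :=
    fun u v w => mem_span_triple_of_eq u v w rfl
  have hJp : Jp (2 * m + 3) = Ideal.span {zp (2 * m + 3), zp (2 * m + 4), zp (2 * m + 5)} := rfl
  apply le_antisymm
  · rw [hJp, Ideal.span_le]
    rintro _ (rfl | rfl | rfl)
    · exact mem_span_singleton_sup_span_singleton_mul 1 0 (zero_mem _) (by ring)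
    · exact mem_span_singleton_sup_span_singleton_mul (X 0) _ (hJ (C c) 0 0) (by rw [h4]; ring)
    · exact mem_span_singleton_sup_span_singleton_mul
        (X 0 ^ 2 + C (16 * (2 * ((m : ℂ) + 1) + 2) ^ 2)) _ (hJ (X 0 * C c) (C c') 0)
        (by rw [h5, h4]; ring)
  · refine sup_le (Ideal.span_le.mpr (by simpa [hJp] using Ideal.subset_span (by simp))) ?_
    rw [hJp, Jp, Ideal.span_mul_span', Ideal.span_le]
    rintro _ ⟨_, rfl, q, hq, rfl⟩
    rcases hq with rfl | rfl | rfl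
    · refine mem_span_triple_of_eq (-(C c⁻¹ * X 0)) (C c⁻¹) 0 ?_
      linear_combination (-C c⁻¹) * h4 - X 1 * zp (2 * m + 1) * C_mul_C_inv hc
    · refine mem_span_triple_of_eq (-(C c'⁻¹ * C (16 * (2 * ((m : ℂ) + 1) + 2) ^ 2)))
        (-(C c'⁻¹ * X 0)) (C c'⁻¹) ?_
      linear_combination (-C c'⁻¹) * h5 - X 1 * zp (2 * m + 2) * C_mul_C_inv hc'
    · exact mem_span_triple_of_eq (X 1) 0 0 (by ring)

lemma isCompl_restrictSupport_Jp (m : ℕ) :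
    IsCompl (restrictSupport ℂ (weightLT (2 * m + 1))) ((Jp (2 * m + 1)).restrictScalars ℂ) := by
  induction m with
  | zero =>
    rw [Jp_one]
    refine isCompl_restrictSupport_span_sup Submodule.mem_top
      (monic_evalX1Zero_zp_and_natDegree 1).1 (degree_evalX1Zero_zp 1) ?_
    rw [Submodule.restrictScalars_top, show 1 - 2 = 0 from rfl, restrictSupport_weightLT_zero]
    exact isCompl_bot_top
  | succ m ih =>
    rw [show 2 * (m + 1) + 1 = 2 * m + 3 by ring, Jp_two_mul_add_three]
    refine isCompl_restrictSupport_span_sup (Ideal.subset_span (by simp))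
      (monic_evalX1Zero_zp_and_natDegree _).1 (degree_evalX1Zero_zp _) ?_
    rwa [show 2 * m + 3 - 2 = 2 * m + 1 by omega]

def groebnerGens (m : ℕ) : Set (MvPolynomial (Fin 2) ℂ) :=
  {p | ∃ i : ℕ, i ≤ m ∧ p = X 1 ^ i * zp (2 * m + 1 - 2 * i)} ∪ {X 1 ^ (m + 1)}

open Pointwise in
lemma groebnerGens_succ (m : ℕ) :
    groebnerGens (m + 1) = {zp (2 * m + 3)} ∪ {X 1} * groebnerGens m := by
  ext q
  simp only [groebnerGens, Set.singleton_mul, Set.image_union, Set.image_singleton,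
    Set.mem_union, Set.mem_ofPred_eq, Set.mem_singleton_iff, Set.mem_image]
  have hzp : ∀ i ≤ m, zp (2 * (m + 1) + 1 - 2 * (i + 1)) = zp (2 * m + 1 - 2 * i) :=
    fun i hi => congrArg zp (by omega)
  constructor
  · rintro (⟨_ | i, hi, rfl⟩ | rfl)
    · exact Or.inl (by simp [show 2 * (m + 1) + 1 = 2 * m + 3 by ring])
    · exact Or.inr (Or.inl ⟨_, ⟨i, by omega, rfl⟩, by rw [hzp i (by omega)]; ring⟩)
    · exact Or.inr (Or.inr (pow_succ' _ _))
  · rintro (rfl | ⟨_, ⟨i, hi, rfl⟩, rfl⟩ | rfl)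
    · exact Or.inl ⟨0, by omega, by simp [show 2 * (m + 1) + 1 = 2 * m + 3 by ring]⟩
    · exact Or.inl ⟨i + 1, by omega, by rw [hzp i hi]; ring⟩
    · exact Or.inr (pow_succ' _ _).symm

lemma Jp_eq_span_groebnerGens (m : ℕ) : Jp (2 * m + 1) = Ideal.span (groebnerGens m) := by
  induction m with
  | zero =>
    rw [Jp_one, Ideal.mul_top, ← Ideal.span_union]
    congr 1
    ext q
    simp [groebnerGens]
  | succ m ih =>
    rw [show 2 * (m + 1) + 1 = 2 * m + 3 by ring, Jp_two_mul_add_three, ih, Ideal.span_mul_span',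
      ← Ideal.span_union, groebnerGens_succ]

noncomputable def weightLTEquiv (m : ℕ) : weightLT (2 * m + 1) ≃
    {p : ℕ × ℕ // p.1 ≤ (2 * m + 1 - 1) / 2 ∧ p.2 ≤ 2 * m + 1 - 2 * p.1 - 1} :=
  ((finTwoArrowEquiv' ℕ).trans (Equiv.prodComm ℕ ℕ)).subtypeEquiv fun d => by
    simp only [weightLT, Set.mem_ofPred_eq, Equiv.trans_apply, finTwoArrowEquiv'_apply,
      Equiv.prodComm_apply, Prod.swap_prod_mk]
    omega

theorem Jp_groebner_basis_general (g : ℕ) (hodd : Odd g) :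
    Jp g = Ideal.span
      ({p | ∃ i : ℕ, i ≤ (g - 1) / 2 ∧ p = (X 1 : MvPolynomial (Fin 2) ℂ) ^ i * zp (g - 2 * i)}
        ∪ {(X 1 : MvPolynomial (Fin 2) ℂ) ^ ((g + 1) / 2)}) ∧
    ∃ b : Module.Basis {p : ℕ × ℕ // p.1 ≤ (g - 1) / 2 ∧ p.2 ≤ g - 2 * p.1 - 1} ℂ
        (MvPolynomial (Fin 2) ℂ ⧸ Jp g),
      ∀ p, b p = Ideal.Quotient.mk (Jp g)
        ((X 0 : MvPolynomial (Fin 2) ℂ) ^ (p : ℕ × ℕ).2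
          * (X 1 : MvPolynomial (Fin 2) ℂ) ^ (p : ℕ × ℕ).1) := by
  obtain ⟨m, rfl⟩ := hodd
  refine ⟨?_, (quotientBasisOfIsCompl (isCompl_restrictSupport_Jp m)).reindex (weightLTEquiv m),
    fun p => ?_⟩
  · rw [Jp_eq_span_groebnerGens, groebnerGens, show (2 * m + 1 - 1) / 2 = m by omega,
      show (2 * m + 1 + 1) / 2 = m + 1 by omega]
  · rw [Module.Basis.reindex_apply, quotientBasisOfIsCompl_apply, monomial_eq_X0_pow_mul_X1_pow]
    simp [weightLTEquiv]

/-- For g ≥ 1 odd, J_g^+ is generated by {ζ_g^+, γ ζ_{g−2}^+, …, γ^{(g−1)/2} ζ_1^+,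
    γ^{(g+1)/2}}, and the monomials α^j γ^i with 0 ≤ i ≤ (g−1)/2, 0 ≤ j ≤ g−2i−1 give a
    basis of ℂ[α,γ]/J_g^+. -/
theorem Jp_groebner_basis (g : ℕ) (hg : 1 ≤ g) (hodd : Odd g) :
    Jp g = Ideal.span
      ({p | ∃ i : ℕ, i ≤ (g - 1) / 2 ∧ p = (X 1 : MvPolynomial (Fin 2) ℂ) ^ i * zp (g - 2 * i)}
        ∪ {(X 1 : MvPolynomial (Fin 2) ℂ) ^ ((g + 1) / 2)}) ∧
    ∃ b : Module.Basis {p : ℕ × ℕ // p.1 ≤ (g - 1) / 2 ∧ p.2 ≤ g - 2 * p.1 - 1} ℂ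
        (MvPolynomial (Fin 2) ℂ ⧸ Jp g),
      ∀ p, b p = Ideal.Quotient.mk (Jp g)
        ((X 0 : MvPolynomial (Fin 2) ℂ) ^ (p : ℕ × ℕ).2
          * (X 1 : MvPolynomial (Fin 2) ℂ) ^ (p : ℕ × ℕ).1) :=
  Jp_groebner_basis_general g hodd
end
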